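/- Let π : (X,G) → (Y,G) be a factor map between G-systems. Then the relative upper entropy dimension D̄(X,G|π) equals the supremum of D̄(G,W|π) over all standard covers W of X, where a standard cover is an open cover consisting of two non-dense open sets. -/

import Mathlib

open Filter Topology Pointwise
open scoped ENNReal

/-- A Følner sequence for a group `G`. -/
def IsFolnerSeq (G : Type*) [Group G] (F : ℕ → Finset G) : Prop :=
  (∀ n, (F n).Nonempty) ∧
    ∀ (K : Finset G) (δ : ℝ), 0 < δ →
      ∀ᶠ n in atTop,
        ((symmDiff ((K : Set G) * ((F n : Set G))) ((F n : Set G))).ncard : ℝ) <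
          δ * ((F n).card : ℝ)

/-- Amenability of a (countable discrete) group via almost invariant finite sets. -/
def IsAmenableGrp (G : Type*) [Group G] : Prop :=
  ∀ K : Finset G, K.Nonempty → ∀ δ : ℝ, 0 < δ →
    ∃ F : Finset G, F.Nonempty ∧
      ((symmDiff ((K : Set G) * (F : Set G)) (F : Set G)).ncard : ℝ) < δ * (F.card : ℝ)

/-- The finite set `A ∩ S`. -/
noncomputable def interF {G : Type*} (A : Finset G) (S : Set G) : Finset G :=
  @Finset.filter G (fun g => g ∈ S) (Classical.decPred _) A

/-- `S` belongs to `𝓘(G)` : `|S ∩ F n| → ∞`. -/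
def InI {G : Type*} (F : ℕ → Finset G) (S : Set G) : Prop :=
  Tendsto (fun n => (interF (F n) S).card) atTop atTop

/-- `D̄(S, α) = limsup_n |S ∩ F n| / |F n|^α`. -/
noncomputable def DbarAt {G : Type*} (F : ℕ → Finset G) (S : Set G) (α : ℝ) : ℝ≥0∞ :=
  atTop.limsup fun n =>
    ((interF (F n) S).card : ℝ≥0∞) / ENNReal.ofReal (((F n).card : ℝ) ^ α)

/-- `D̲(S, α) = liminf_n |S ∩ F n| / |F n|^α`. -/
noncomputable def DlowAt {G : Type*} (F : ℕ → Finset G) (S : Set G) (α : ℝ) : ℝ≥0∞ :=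
  atTop.liminf fun n =>
    ((interF (F n) S).card : ℝ≥0∞) / ENNReal.ofReal (((F n).card : ℝ) ^ α)

/-- The upper dimension `D̄(S)` of a subset `S ⊆ G`. -/
noncomputable def upperDim {G : Type*} (F : ℕ → Finset G) (S : Set G) : ℝ :=
  sInf {α : ℝ | 0 ≤ α ∧ DbarAt F S α = 0}

/-- The lower dimension `D̲(S)` of a subset `S ⊆ G`. -/
noncomputable def lowerDim {G : Type*} (F : ℕ → Finset G) (S : Set G) : ℝ :=
  sInf {α : ℝ | 0 ≤ α ∧ DlowAt F S α = 0}

/-- A finite open cover of `X`. -/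
def IsOpenCover {X : Type*} [TopologicalSpace X] (𝒰 : Set (Set X)) : Prop :=
  𝒰.Finite ∧ (∀ U ∈ 𝒰, IsOpen U) ∧ ⋃₀ 𝒰 = Set.univ

/-- Minimal number of members of `𝒰` needed to cover `E`. -/
noncomputable def coverNum {X : Type*} (𝒰 : Set (Set X)) (E : Set X) : ℕ :=
  sInf {k | ∃ t : Finset (Set X), ↑t ⊆ 𝒰 ∧ t.card = k ∧ E ⊆ ⋃₀ (t : Set (Set X))}

/-- `N(𝒰 | π) = sup_y` of the covering number of the fiber `π ⁻¹ y`. -/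
noncomputable def NRel {X Y : Type*} (𝒰 : Set (Set X)) (π : X → Y) : ℕ :=
  ⨆ y : Y, coverNum 𝒰 (π ⁻¹' {y})

/-- A factor map between `G`-systems. -/
def IsFactorMap (G : Type*) {X Y : Type*} [Group G] [TopologicalSpace X] [TopologicalSpace Y]
    [MulAction G X] [MulAction G Y] (π : X → Y) : Prop :=
  Continuous π ∧ Function.Surjective π ∧ ∀ (g : G) (x : X), π (g • x) = g • π x

/-- The join `⋁_{g ∈ B} g⁻¹ 𝒰`. -/
def dynJoin {G X : Type*} [Group G] [MulAction G X] (B : Finset G) (𝒰 : Set (Set X)) :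
    Set (Set X) :=
  {W | ∃ f : G → Set X, (∀ g ∈ B, f g ∈ 𝒰) ∧ W = ⋂ g ∈ B, (fun x => g • x) ⁻¹' f g}

/-- `h̄(G, 𝒰, α | π)`. -/
noncomputable def hRelU {G X Y : Type*} [Group G] [MulAction G X]
    (F : ℕ → Finset G) (𝒰 : Set (Set X)) (π : X → Y) (α : ℝ) : ℝ≥0∞ :=
  atTop.limsup fun n =>
    ENNReal.ofReal (Real.log (NRel (dynJoin (F n) 𝒰) π)) /
      ENNReal.ofReal (((F n).card : ℝ) ^ α)

/-- `h̲(G, 𝒰, α | π)`. -/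
noncomputable def hRelL {G X Y : Type*} [Group G] [MulAction G X]
    (F : ℕ → Finset G) (𝒰 : Set (Set X)) (π : X → Y) (α : ℝ) : ℝ≥0∞ :=
  atTop.liminf fun n =>
    ENNReal.ofReal (Real.log (NRel (dynJoin (F n) 𝒰) π)) /
      ENNReal.ofReal (((F n).card : ℝ) ^ α)

/-- The relative upper entropy dimension `D̄(G, 𝒰 | π)` of a cover. -/
noncomputable def DU {G X Y : Type*} [Group G] [MulAction G X]
    (F : ℕ → Finset G) (𝒰 : Set (Set X)) (π : X → Y) : ℝ :=
  sInf {α : ℝ | 0 ≤ α ∧ hRelU F 𝒰 π α = 0}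

/-- The relative lower entropy dimension `D̲(G, 𝒰 | π)` of a cover. -/
noncomputable def DL {G X Y : Type*} [Group G] [MulAction G X]
    (F : ℕ → Finset G) (𝒰 : Set (Set X)) (π : X → Y) : ℝ :=
  sInf {α : ℝ | 0 ≤ α ∧ hRelL F 𝒰 π α = 0}

/-- The relative upper entropy dimension `D̄(X, G | π)` of the system. -/
noncomputable def DUSys {G X Y : Type*} [Group G] [TopologicalSpace X] [MulAction G X]
    (F : ℕ → Finset G) (π : X → Y) : ℝ :=
  sSup {d : ℝ | ∃ 𝒰 : Set (Set X), IsOpenCover 𝒰 ∧ d = DU F 𝒰 π}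

/-- The relative lower entropy dimension `D̲(X, G | π)` of the system. -/
noncomputable def DLSys {G X Y : Type*} [Group G] [TopologicalSpace X] [MulAction G X]
    (F : ℕ → Finset G) (π : X → Y) : ℝ :=
  sSup {d : ℝ | ∃ 𝒰 : Set (Set X), IsOpenCover 𝒰 ∧ d = DL F 𝒰 π}

/-- `(1 / |F n ∩ S|) log N(⋁_{g ∈ F n ∩ S} g⁻¹ 𝒰 | π)`. -/
noncomputable def entAlong {G X Y : Type*} [Group G] [MulAction G X]
    (F : ℕ → Finset G) (S : Set G) (𝒰 : Set (Set X)) (π : X → Y) : ℕ → ℝ≥0∞ :=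
  fun n =>
    ENNReal.ofReal (Real.log (NRel (dynJoin (interF (F n) S) 𝒰) π)) /
      ((interF (F n) S).card : ℝ≥0∞)

/-- `S` is a relative entropy generating set of `𝒰` relative to `π`. -/
def IsEntGen {G X Y : Type*} [Group G] [MulAction G X]
    (F : ℕ → Finset G) (S : Set G) (𝒰 : Set (Set X)) (π : X → Y) : Prop :=
  InI F S ∧ 0 < atTop.liminf (entAlong F S 𝒰 π)

/-- `S ∈ 𝒫(G, 𝒰 | π)` : positive relative upper entropy along `S`. -/
def InP {G X Y : Type*} [Group G] [MulAction G X]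
    (F : ℕ → Finset G) (S : Set G) (𝒰 : Set (Set X)) (π : X → Y) : Prop :=
  InI F S ∧ 0 < atTop.limsup (entAlong F S 𝒰 π)

/-- `D̄_e(G, 𝒰 | π)`. -/
noncomputable def DeU {G X Y : Type*} [Group G] [MulAction G X]
    (F : ℕ → Finset G) (𝒰 : Set (Set X)) (π : X → Y) : ℝ :=
  sSup {d : ℝ | ∃ S : Set G, IsEntGen F S 𝒰 π ∧ d = upperDim F S}

/-- `D̲_e(G, 𝒰 | π)`. -/
noncomputable def DeL {G X Y : Type*} [Group G] [MulAction G X]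
    (F : ℕ → Finset G) (𝒰 : Set (Set X)) (π : X → Y) : ℝ :=
  sSup {d : ℝ | ∃ S : Set G, IsEntGen F S 𝒰 π ∧ d = lowerDim F S}

/-- `D̄_p(G, 𝒰 | π)`. -/
noncomputable def DpU {G X Y : Type*} [Group G] [MulAction G X]
    (F : ℕ → Finset G) (𝒰 : Set (Set X)) (π : X → Y) : ℝ :=
  sSup {d : ℝ | ∃ S : Set G, InP F S 𝒰 π ∧ d = upperDim F S}

/-- `D̲_p(G, 𝒰 | π)`. -/
noncomputable def DpL {G X Y : Type*} [Group G] [MulAction G X]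
    (F : ℕ → Finset G) (𝒰 : Set (Set X)) (π : X → Y) : ℝ :=
  sSup {d : ℝ | ∃ S : Set G, InP F S 𝒰 π ∧ d = lowerDim F S}

/-- `D̄_e(X, G | π)`. -/
noncomputable def DeUSys {G X Y : Type*} [Group G] [TopologicalSpace X] [MulAction G X]
    (F : ℕ → Finset G) (π : X → Y) : ℝ :=
  sSup {d : ℝ | ∃ 𝒰 : Set (Set X), IsOpenCover 𝒰 ∧ d = DeU F 𝒰 π}

/-- `D̲_p(X, G | π)`. -/
noncomputable def DpLSys {G X Y : Type*} [Group G] [TopologicalSpace X] [MulAction G X]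
    (F : ℕ → Finset G) (π : X → Y) : ℝ :=
  sSup {d : ℝ | ∃ 𝒰 : Set (Set X), IsOpenCover 𝒰 ∧ d = DpL F 𝒰 π}

/-- The cover `{X ∖ cl B(x i, 1/k) : i}` associated with a tuple. -/
def ballCover {X : Type*} [MetricSpace X] {n : ℕ} (x : Fin n → X) (k : ℕ) : Set (Set X) :=
  {V | ∃ i : Fin n, V = (Metric.closedBall (x i) (1 / (k : ℝ)))ᶜ}

/-- The relative entropy dimension `D̄(x₁, …, x_n | π)` of a tuple. -/
noncomputable def tupleDim {G X Y : Type*} [Group G] [MetricSpace X] [MulAction G X] {n : ℕ}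
    (F : ℕ → Finset G) (x : Fin n → X) (π : X → Y) : ℝ :=
  limUnder atTop fun k : ℕ => DU F (ballCover x k) π

/-- The tuple lies on the diagonal. -/
def IsDiag {X : Type*} {n : ℕ} (x : Fin n → X) : Prop := ∀ i j, x i = x j

/-- The `n`-th relative dimension set `𝒟_n(X, G | π)`. -/
noncomputable def dimSet {G X Z : Type*} [Group G] [MetricSpace X] [MulAction G X]
    (F : ℕ → Finset G) (π : X → Z) (n : ℕ) : Set ℝ :=
  {α : ℝ | 0 ≤ α ∧ ∃ x : Fin n → X, ¬ IsDiag x ∧ tupleDim F x π = α}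

/-- The translated cover `g𝒰`. -/
def smulCover {G X : Type*} [SMul G X] (g : G) (𝒰 : Set (Set X)) : Set (Set X) :=
  (fun U => (fun x => g • x) '' U) '' 𝒰

/-- The join `𝒰 ∨ 𝒱` of two covers. -/
def covJoin {X : Type*} (𝒰 𝒱 : Set (Set X)) : Set (Set X) :=
  {W | ∃ U ∈ 𝒰, ∃ V ∈ 𝒱, W = U ∩ V}

/-- A standard cover: two non-dense open sets covering `X`. -/
def IsStandardCover {X : Type*} [TopologicalSpace X] (𝒲 : Set (Set X)) : Prop :=
  ∃ U V : Set X, 𝒲 = {U, V} ∧ IsOpen U ∧ IsOpen V ∧ U ∪ V = Set.univ ∧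
    ¬ Dense U ∧ ¬ Dense V

/-!
Let `𝒰` be a finite open cover of the compact metric space `X`, with Lebesgue number `δ`, and
let `r > 0` be small compared with `δ` and with the diameter of `X`. Cover `X` by finitely many
balls `B(xᵢ, r)`. Each `𝒲ᵢ = {B(xᵢ, 2r), X ∖ B̄(xᵢ, r)}` is a standard cover, and their join refines
`𝒰`: a nonempty member of the join meets some `B(xᵢ, r)`, so its `i`-th factor is `B(xᵢ, 2r)`,
which lies in a member of `𝒰`. Hence `N(⋁_{g ∈ F n} g⁻¹𝒰 | π) ≤ ∏ᵢ N(⋁_{g ∈ F n} g⁻¹𝒲ᵢ | π)`,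
and taking logarithms, `D̄(G, 𝒰 | π) ≤ maxᵢ D̄(G, 𝒲ᵢ | π)`. In the degenerate cases (`F n`
eventually constant, or `X` a single point) every `D̄(G, 𝒰 | π)` vanishes.
-/

open Set Metric

section Covers

variable {X : Type*}

def JoinRefines {ι : Type*} (𝒲 : ι → Set (Set X)) (𝒰 : Set (Set X)) : Prop :=
  ∀ c : ι → Set X, (∀ i, c i ∈ 𝒲 i) → ∃ U ∈ 𝒰, ⋂ i, c i ⊆ U

lemma coverNum_le_card {𝒱 : Set (Set X)} {E : Set X} {t : Finset (Set X)}
    (ht : ↑t ⊆ 𝒱) (hE : E ⊆ ⋃₀ ↑t) : coverNum 𝒱 E ≤ t.card :=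
  Nat.sInf_le ⟨t, ht, rfl, hE⟩

lemma exists_card_eq_coverNum {𝒱 : Set (Set X)} {E : Set X} {t : Finset (Set X)}
    (ht : ↑t ⊆ 𝒱) (hE : E ⊆ ⋃₀ ↑t) :
    ∃ s : Finset (Set X), ↑s ⊆ 𝒱 ∧ s.card = coverNum 𝒱 E ∧ E ⊆ ⋃₀ ↑s :=
  Nat.sInf_mem (s := {k | ∃ s : Finset (Set X), (s : Set (Set X)) ⊆ 𝒱 ∧ s.card = k ∧
    E ⊆ ⋃₀ (s : Set (Set X))})
    ⟨t.card, t, ht, rfl, hE⟩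

lemma coverNum_le_one {𝒱 : Set (Set X)} {E : Set X} (hE : E.Subsingleton)
    (hcov : ⋃₀ 𝒱 = univ) : coverNum 𝒱 E ≤ 1 := by
  rcases hE.eq_empty_or_singleton with rfl | ⟨x, rfl⟩
  · exact (coverNum_le_card (t := ∅) (by simp) (by simp)).trans zero_le_one
  · obtain ⟨U, hU, hxU⟩ : x ∈ ⋃₀ 𝒱 := hcov ▸ mem_univ x
    exact (coverNum_le_card (t := {U}) (by simpa) (by simpa)).trans (by simp)

lemma coverNum_le_prod_of_joinRefines {ι : Type*} [Fintype ι] {𝒲 : ι → Set (Set X)}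
    {𝒰 : Set (Set X)} (h : JoinRefines 𝒲 𝒰) {E : Set X}
    (hE : ∀ i, ∃ t : Finset (Set X), ↑t ⊆ 𝒲 i ∧ E ⊆ ⋃₀ ↑t) :
    coverNum 𝒰 E ≤ ∏ i, coverNum (𝒲 i) E := by
  classical
  choose t ht hEt using hE
  choose s hs hcard hEs using fun i => exists_card_eq_coverNum (ht i) (hEt i)
  choose! T hT hsub using h
  calc coverNum 𝒰 E ≤ ((Fintype.piFinset s).image T).card := by
        refine coverNum_le_card ?_ fun x hx => ?_
        · simp only [Finset.coe_image, image_subset_iff]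
          intro c hc
          exact hT c fun i => hs i (Fintype.mem_piFinset.1 hc i)
        · choose c hcs hxc using fun i => mem_sUnion.1 (hEs i hx)
          refine mem_sUnion.2 ⟨T c, Finset.mem_image_of_mem _ (Fintype.mem_piFinset.2 hcs), ?_⟩
          exact hsub c (fun i => hs i (hcs i)) (mem_iInter.2 hxc)
    _ ≤ (Fintype.piFinset s).card := Finset.card_image_le
    _ = ∏ i, coverNum (𝒲 i) E := by simp only [Fintype.card_piFinset, hcard]

end Covers

section DynamicalJoin

variable {G X Y : Type*} [Group G] [MulAction G X]

lemma JoinRefines.dynJoin {ι : Type*} {𝒲 : ι → Set (Set X)} {𝒰 : Set (Set X)}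
    (h : JoinRefines 𝒲 𝒰) (B : Finset G) :
    JoinRefines (fun i => dynJoin B (𝒲 i)) (dynJoin B 𝒰) := by
  intro c hc
  choose f hf hcf using hc
  choose! U hU hsub using fun g (hg : g ∈ B) => h (fun i => f i g) fun i => hf i g hg
  refine ⟨_, ⟨U, hU, rfl⟩, fun x hx => mem_iInter₂.2 fun g hg => hsub g hg ?_⟩
  refine mem_iInter.2 fun i => ?_
  have hxi := mem_iInter.1 hx i
  rw [hcf i] at hxi
  exact mem_iInter₂.1 hxi g hg

lemma exists_finset_subset_dynJoin {𝒰 : Set (Set X)} (hfin : 𝒰.Finite) (hcov : ⋃₀ 𝒰 = univ)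
    (B : Finset G) :
    ∃ t : Finset (Set X), ↑t ⊆ dynJoin B 𝒰 ∧ ⋃₀ (t : Set (Set X)) = univ ∧
      t.card ≤ 𝒰.ncard ^ B.card := by
  classical
  let Θ : (B → hfin.toFinset) → Set X := fun f => ⋂ g : B, (fun x => (g : G) • x) ⁻¹' f g
  refine ⟨Finset.univ.image Θ, ?_, ?_, ?_⟩
  · simp only [Finset.coe_image, Finset.coe_univ, image_univ, range_subset_iff]
    intro f
    refine ⟨fun g => if hg : g ∈ B then f ⟨g, hg⟩ else ∅, fun g hg => ?_, ?_⟩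
    · simp only [dif_pos hg]
      exact hfin.mem_toFinset.1 (f ⟨g, hg⟩).2
    · ext x
      simp +contextual [Θ]
  · refine eq_univ_of_forall fun x => ?_
    have hx : ∀ g : B, ∃ U ∈ hfin.toFinset, (g : G) • x ∈ U := fun g => by
      obtain ⟨U, hU, hxU⟩ : (g : G) • x ∈ ⋃₀ 𝒰 := hcov ▸ mem_univ _
      exact ⟨U, hfin.mem_toFinset.2 hU, hxU⟩
    choose U hU hxU using hx
    exact mem_sUnion.2 ⟨Θ fun g => ⟨U g, hU g⟩, by simp, mem_iInter.2 hxU⟩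
  · refine Finset.card_image_le.trans ?_
    simp [Set.ncard_eq_toFinset_card 𝒰 hfin]

variable {𝒰 : Set (Set X)} {π : X → Y}

lemma coverNum_dynJoin_le_pow (hfin : 𝒰.Finite) (hcov : ⋃₀ 𝒰 = univ) (B : Finset G)
    (E : Set X) : coverNum (dynJoin B 𝒰) E ≤ 𝒰.ncard ^ B.card := by
  obtain ⟨t, ht, htcov, hcard⟩ := exists_finset_subset_dynJoin hfin hcov B
  exact (coverNum_le_card ht (htcov ▸ subset_univ E)).trans hcard

lemma NRel_dynJoin_le_pow (hfin : 𝒰.Finite) (hcov : ⋃₀ 𝒰 = univ) (B : Finset G) :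
    NRel (dynJoin B 𝒰) π ≤ 𝒰.ncard ^ B.card :=
  ciSup_le' fun _ => coverNum_dynJoin_le_pow hfin hcov B _

lemma coverNum_le_NRel_dynJoin (hfin : 𝒰.Finite) (hcov : ⋃₀ 𝒰 = univ) (B : Finset G)
    (y : Y) : coverNum (dynJoin B 𝒰) (π ⁻¹' {y}) ≤ NRel (dynJoin B 𝒰) π :=
  le_ciSup (f := fun y => coverNum (dynJoin B 𝒰) (π ⁻¹' {y}))
    ⟨_, forall_mem_range.2 fun _ => coverNum_dynJoin_le_pow hfin hcov B _⟩ y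

lemma NRel_dynJoin_le_prod {ι : Type*} [Fintype ι] {𝒲 : ι → Set (Set X)}
    (hfin : ∀ i, (𝒲 i).Finite) (hcov : ∀ i, ⋃₀ 𝒲 i = univ) (h : JoinRefines 𝒲 𝒰)
    (B : Finset G) : NRel (dynJoin B 𝒰) π ≤ ∏ i, NRel (dynJoin B (𝒲 i)) π := by
  refine ciSup_le' fun y => (coverNum_le_prod_of_joinRefines (h.dynJoin B) fun i => ?_).trans
    (Finset.prod_le_prod' fun i _ => coverNum_le_NRel_dynJoin (hfin i) (hcov i) B y)
  obtain ⟨t, ht, htcov, -⟩ := exists_finset_subset_dynJoin (hfin i) (hcov i) B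
  exact ⟨t, ht, htcov ▸ subset_univ _⟩

lemma NRel_dynJoin_le_one [Subsingleton X] (hfin : 𝒰.Finite) (hcov : ⋃₀ 𝒰 = univ)
    (B : Finset G) : NRel (dynJoin B 𝒰) π ≤ 1 := by
  obtain ⟨t, ht, htcov, -⟩ := exists_finset_subset_dynJoin hfin hcov B
  exact ciSup_le' fun _ => coverNum_le_one (subsingleton_of_subsingleton)
    (eq_univ_of_univ_subset (htcov ▸ sUnion_mono ht))

end DynamicalJoin

lemma Real.log_natCast_le_sum_of_le_prod {ι : Type*} (s : Finset ι) {n : ℕ} {m : ι → ℕ}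
    (h : n ≤ ∏ i ∈ s, m i) : Real.log n ≤ ∑ i ∈ s, Real.log (m i) := by
  rcases Nat.eq_zero_or_pos n with rfl | hn
  · simpa using Finset.sum_nonneg fun i _ => Real.log_natCast_nonneg (m i)
  have hm : ∀ i ∈ s, (m i : ℝ) ≠ 0 := fun i hi =>
    Nat.cast_ne_zero.2 (Finset.prod_ne_zero_iff.1 (by omega) i hi)
  calc Real.log n ≤ Real.log ((∏ i ∈ s, m i : ℕ) : ℝ) :=
        Real.log_le_log (by exact_mod_cast hn) (by exact_mod_cast h)
    _ = ∑ i ∈ s, Real.log (m i) := by rw [Nat.cast_prod, Real.log_prod hm]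

lemma Real.log_natCast_le_mul_of_le_pow {n m k : ℕ} (h : n ≤ m ^ k) :
    Real.log n ≤ k * Real.log m := by
  simpa using Real.log_natCast_le_sum_of_le_prod (Finset.range k) (m := fun _ => m) (by simpa)

section Entropy

variable {G X Y : Type*} [Group G] [MulAction G X] {F : ℕ → Finset G} {𝒰 : Set (Set X)}
  {π : X → Y} {α : ℝ}

lemma hRelU_eq_zero_of_le_of_tendsto {w : ℕ → ℝ≥0∞}
    (hle : ∀ᶠ n in atTop, ENNReal.ofReal (Real.log (NRel (dynJoin (F n) 𝒰) π)) /
      ENNReal.ofReal (((F n).card : ℝ) ^ α) ≤ w n)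
    (hw : Tendsto w atTop (𝓝 0)) : hRelU F 𝒰 π α = 0 :=
  le_antisymm ((limsup_le_limsup hle).trans_eq hw.limsup_eq) zero_le

lemma tendsto_of_hRelU_eq_zero (h : hRelU F 𝒰 π α = 0) :
    Tendsto (fun n => ENNReal.ofReal (Real.log (NRel (dynJoin (F n) 𝒰) π)) /
      ENNReal.ofReal (((F n).card : ℝ) ^ α)) atTop (𝓝 0) :=
  tendsto_of_liminf_eq_limsup (le_antisymm (le_trans liminf_le_limsup h.le) zero_le) h

lemma hRelU_antitone (htend : Tendsto (fun n => (F n).card) atTop atTop) :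
    Antitone (hRelU F 𝒰 π) := fun α β hαβ => by
  refine limsup_le_limsup ((htend.eventually_ge_atTop 1).mono fun n hn => ?_)
  refine ENNReal.div_le_div_left (ENNReal.ofReal_le_ofReal ?_) _
  exact Real.rpow_le_rpow_of_exponent_le (by exact_mod_cast hn) hαβ

lemma hRelU_two_eq_zero (htend : Tendsto (fun n => (F n).card) atTop atTop)
    (hfin : 𝒰.Finite) (hcov : ⋃₀ 𝒰 = univ) : hRelU F 𝒰 π 2 = 0 := by
  refine hRelU_eq_zero_of_le_of_tendsto
    (w := fun n => ENNReal.ofReal (Real.log 𝒰.ncard / (F n).card))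
    ((htend.eventually_ge_atTop 1).mono fun n hn => ?_) ?_
  · have hc : (0 : ℝ) < (F n).card := by exact_mod_cast hn
    have hlog := Real.log_natCast_le_mul_of_le_pow (NRel_dynJoin_le_pow (π := π) hfin hcov (F n))
    rw [← ENNReal.ofReal_div_of_pos (by positivity)]
    refine ENNReal.ofReal_le_ofReal ((div_le_div_of_nonneg_right hlog (by positivity)).trans_eq ?_)
    rw [Real.rpow_two]
    field_simp
  · simpa using ENNReal.tendsto_ofReal ((tendsto_const_div_atTop_nhds_zero_nat _).comp htend)

lemma hRelU_eq_zero_of_joinRefines {ι : Type*} [Fintype ι] {𝒲 : ι → Set (Set X)}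
    (hfin : ∀ i, (𝒲 i).Finite) (hcov : ∀ i, ⋃₀ 𝒲 i = univ) (h : JoinRefines 𝒲 𝒰)
    (h0 : ∀ i, hRelU F (𝒲 i) π α = 0) : hRelU F 𝒰 π α = 0 := by
  refine hRelU_eq_zero_of_le_of_tendsto (Eventually.of_forall fun n => ?_)
    (by simpa using tendsto_finsetSum Finset.univ fun i _ => tendsto_of_hRelU_eq_zero (h0 i))
  have hlog :=
    Real.log_natCast_le_sum_of_le_prod _ (NRel_dynJoin_le_prod (π := π) hfin hcov h (F n))
  calc _ ≤ ENNReal.ofReal (∑ i, Real.log (NRel (dynJoin (F n) (𝒲 i)) π)) /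
        ENNReal.ofReal (((F n).card : ℝ) ^ α) :=
        ENNReal.div_le_div_right (ENNReal.ofReal_le_ofReal hlog) _
    _ = _ := by
      rw [ENNReal.ofReal_sum_of_nonneg fun i _ => Real.log_natCast_nonneg _]
      simp only [div_eq_mul_inv, Finset.sum_mul]

lemma hRelU_eq_zero_of_NRel_le_one (h : ∀ n, NRel (dynJoin (F n) 𝒰) π ≤ 1) :
    hRelU F 𝒰 π α = 0 := by
  refine hRelU_eq_zero_of_le_of_tendsto (w := 0) (Eventually.of_forall fun n => ?_)
    tendsto_const_nhds
  rw [ENNReal.ofReal_eq_zero.2 (Real.log_nonpos (Nat.cast_nonneg _) (by exact_mod_cast h n)),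
    ENNReal.zero_div]
  exact le_rfl

end Entropy

lemma Finset.eventually_const_or_tendsto_card {α : Type*} {F : ℕ → Finset α} (hF : Monotone F) :
    (∃ n₀, ∀ n ≥ n₀, F n = F n₀) ∨ Tendsto (fun n => (F n).card) atTop atTop := by
  by_cases hbdd : BddAbove (Set.range fun n => (F n).card)
  · left
    obtain ⟨n₀, hn₀⟩ := Nat.sSup_mem (Set.range_nonempty _) hbdd
    refine ⟨n₀, fun n hn => (Finset.eq_of_subset_of_card_le (hF hn) ?_).symm⟩
    exact (le_csSup hbdd (Set.mem_range_self n)).trans_eq hn₀.symm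
  · right
    rw [not_bddAbove_iff] at hbdd
    refine tendsto_atTop_atTop_of_monotone (fun m n h => Finset.card_le_card (hF h)) fun b => ?_
    obtain ⟨_, ⟨n, rfl⟩, hn⟩ := hbdd b
    exact ⟨n, hn.le⟩

section Dimension

variable {G X Y : Type*} [Group G] [MulAction G X] {F : ℕ → Finset G} {𝒰 : Set (Set X)}
  {π : X → Y}

lemma DU_nonneg : 0 ≤ DU F 𝒰 π :=
  Real.sInf_nonneg fun _ hα => hα.1

lemma DU_le_of_hRelU_eq_zero {α : ℝ} (hα : 0 ≤ α) (h : hRelU F 𝒰 π α = 0) : DU F 𝒰 π ≤ α :=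
  csInf_le ⟨0, fun _ hβ => hβ.1⟩ ⟨hα, h⟩

lemma DU_eq_zero_of_hRelU_eq_zero (h : hRelU F 𝒰 π 0 = 0) : DU F 𝒰 π = 0 :=
  le_antisymm (DU_le_of_hRelU_eq_zero le_rfl h) DU_nonneg

lemma hRelU_eq_zero_of_DU_lt (htend : Tendsto (fun n => (F n).card) atTop atTop)
    (hfin : 𝒰.Finite) (hcov : ⋃₀ 𝒰 = univ) {α : ℝ} (h : DU F 𝒰 π < α) :
    hRelU F 𝒰 π α = 0 := by
  obtain ⟨β, ⟨-, hβ⟩, hβα⟩ :=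
    exists_lt_of_csInf_lt (s := {β : ℝ | 0 ≤ β ∧ hRelU F 𝒰 π β = 0})
    ⟨2, zero_le_two, hRelU_two_eq_zero htend hfin hcov⟩ h
  exact le_antisymm (hβ ▸ hRelU_antitone htend hβα.le) zero_le

lemma DU_le_two (htend : Tendsto (fun n => (F n).card) atTop atTop) (hfin : 𝒰.Finite)
    (hcov : ⋃₀ 𝒰 = univ) : DU F 𝒰 π ≤ 2 :=
  DU_le_of_hRelU_eq_zero zero_le_two (hRelU_two_eq_zero htend hfin hcov)

lemma DU_eq_zero_of_subsingleton [Subsingleton X] (hfin : 𝒰.Finite) (hcov : ⋃₀ 𝒰 = univ) :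
    DU F 𝒰 π = 0 :=
  DU_eq_zero_of_hRelU_eq_zero
    (hRelU_eq_zero_of_NRel_le_one fun n => NRel_dynJoin_le_one hfin hcov (F n))

lemma DU_eq_zero_of_eventually_const {n₀ : ℕ} (hconst : ∀ n ≥ n₀, F n = F n₀) :
    DU F 𝒰 π = 0 := by
  set c := ENNReal.ofReal (Real.log (NRel (dynJoin (F n₀) 𝒰) π))
  have hval : ∀ α : ℝ, hRelU F 𝒰 π α = c / ENNReal.ofReal (((F n₀).card : ℝ) ^ α) := fun α => by
    rw [hRelU, limsup_congr ((eventually_ge_atTop n₀).mono fun n hn => by rw [hconst n hn]),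
      limsup_const]
  by_cases hc : c = 0
  · exact DU_eq_zero_of_hRelU_eq_zero (by rw [hval, hc, ENNReal.zero_div])
  · have hempty : {α : ℝ | 0 ≤ α ∧ hRelU F 𝒰 π α = 0} = ∅ :=
      eq_empty_of_forall_notMem fun α ⟨_, hα⟩ => by
        rw [hval, ENNReal.div_eq_zero_iff] at hα
        exact hα.elim hc ENNReal.ofReal_ne_top
    rw [DU, hempty, Real.sInf_empty]

lemma DU_le_of_joinRefines (htend : Tendsto (fun n => (F n).card) atTop atTop)
    {ι : Type*} [Fintype ι] {𝒲 : ι → Set (Set X)} (hfin : ∀ i, (𝒲 i).Finite)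
    (hcov : ∀ i, ⋃₀ 𝒲 i = univ) (h : JoinRefines 𝒲 𝒰) {b : ℝ} (hb₀ : 0 ≤ b)
    (hb : ∀ i, DU F (𝒲 i) π ≤ b) : DU F 𝒰 π ≤ b :=
  le_of_forall_pos_le_add fun ε hε => DU_le_of_hRelU_eq_zero (by positivity) <|
    hRelU_eq_zero_of_joinRefines hfin hcov h fun i =>
      hRelU_eq_zero_of_DU_lt htend (hfin i) (hcov i) ((hb i).trans_lt (lt_add_of_pos_right b hε))

end Dimension

section StandardCovers

variable {X : Type*}

lemma IsStandardCover.isOpenCover [TopologicalSpace X] {𝒲 : Set (Set X)}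
    (h : IsStandardCover 𝒲) : IsOpenCover 𝒲 := by
  obtain ⟨U, V, rfl, hU, hV, hUV, -, -⟩ := h
  refine ⟨toFinite _, ?_, by rw [sUnion_pair, hUV]⟩
  rintro W (rfl | rfl) <;> assumption

lemma not_dense_of_disjoint_ball [PseudoMetricSpace X] {s : Set X} {x : X} {r : ℝ} (hr : 0 < r)
    (h : Disjoint (ball x r) s) : ¬Dense s := fun hs =>
  (hs.inter_open_nonempty _ isOpen_ball ⟨x, mem_ball_self hr⟩).not_disjoint h

lemma isStandardCover_ball_compl_closedBall [PseudoMetricSpace X] {x y : X} {r : ℝ}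
    (hr : 0 < r) (hxy : 3 * r ≤ dist x y) :
    IsStandardCover {ball x (2 * r), (closedBall x r)ᶜ} := by
  refine ⟨_, _, rfl, isOpen_ball, isClosed_closedBall.isOpen_compl, ?_, ?_, ?_⟩
  · refine eq_univ_of_forall fun z => ?_
    by_cases hz : dist z x ≤ r
    · exact Or.inl (mem_ball.2 (by linarith))
    · exact Or.inr hz
  · refine not_dense_of_disjoint_ball (x := y) hr (disjoint_left.2 fun z hzy hzx => ?_)
    rw [mem_ball] at hzy hzx
    linarith [dist_triangle x z y, dist_comm x z]
  · exact not_dense_of_disjoint_ball hr (disjoint_compl_right_iff_subset.2 ball_subset_closedBall)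

lemma exists_isStandardCover_joinRefines [MetricSpace X] [CompactSpace X] [Nontrivial X]
    {𝒰 : Set (Set X)} (hopen : ∀ U ∈ 𝒰, IsOpen U) (hcov : ⋃₀ 𝒰 = univ) :
    ∃ (t : Finset X) (𝒲 : t → Set (Set X)), (∀ i, IsStandardCover (𝒲 i)) ∧ JoinRefines 𝒲 𝒰 := by
  obtain ⟨p, q, hpq⟩ := exists_pair_ne X
  obtain ⟨δ, hδ, hleb⟩ :=
    lebesgue_number_lemma_of_metric_sUnion isCompact_univ hopen hcov.symm.subset
  set r := min (dist p q / 6) (δ / 2)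
  have hr : 0 < r := lt_min (by have := dist_pos.2 hpq; linarith) (by linarith)
  obtain ⟨t, ht⟩ := isCompact_univ.elim_finite_subcover (fun x : X => ball x r)
    (fun _ => isOpen_ball) fun x _ => mem_iUnion.2 ⟨x, mem_ball_self hr⟩
  refine ⟨t, fun x => {ball (x : X) (2 * r), (closedBall (x : X) r)ᶜ}, fun x => ?_, ?_⟩
  · -- one of `p`, `q` is at distance at least `dist p q / 2 ≥ 3r` from `x`
    have htri := dist_triangle_left p q x
    have hr6 : r ≤ dist p q / 6 := min_le_left _ _
    rcases le_total (dist p q / 2) (dist (x : X) p) with hp | hp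
    · exact isStandardCover_ball_compl_closedBall (y := p) hr (by linarith)
    · exact isStandardCover_ball_compl_closedBall (y := q) hr (by linarith [dist_comm (x : X) p])
  · intro c hc
    rcases (⋂ i, c i).eq_empty_or_nonempty with hempty | ⟨z, hz⟩
    · obtain ⟨U, hU, -⟩ : p ∈ ⋃₀ 𝒰 := hcov ▸ mem_univ p
      exact ⟨U, hU, hempty ▸ empty_subset U⟩
    obtain ⟨x, hxt, hzx⟩ := mem_iUnion₂.1 (ht (mem_univ z))
    have hcx : c ⟨x, hxt⟩ = ball x (2 * r) := by
      refine (hc ⟨x, hxt⟩).resolve_right fun h => ?_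
      exact (mem_singleton_iff.1 h ▸ mem_iInter.1 hz ⟨x, hxt⟩) (ball_subset_closedBall hzx)
    obtain ⟨U, hU, hδU⟩ := hleb x (mem_univ x)
    refine ⟨U, hU, (iInter_subset c ⟨x, hxt⟩).trans (hcx ▸ (ball_subset_ball ?_).trans hδU)⟩
    linarith [show r ≤ δ / 2 from min_le_right _ _]

end StandardCovers

theorem stmt8_general {G X Y : Type*} [Group G] [MetricSpace X] [CompactSpace X] [MulAction G X]
    (π : X → Y) (F : ℕ → Finset G) (hFmono : ∀ n, F n ⊆ F (n + 1)) :
    DUSys F π = sSup {d : ℝ | ∃ 𝒲 : Set (Set X), IsStandardCover 𝒲 ∧ d = DU F 𝒲 π} := by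
  set L := {d : ℝ | ∃ 𝒰 : Set (Set X), IsOpenCover 𝒰 ∧ d = DU F 𝒰 π}
  set S := {d : ℝ | ∃ 𝒲 : Set (Set X), IsStandardCover 𝒲 ∧ d = DU F 𝒲 π}
  change sSup L = sSup S
  have hL₀ : 0 ≤ sSup L := Real.sSup_nonneg (by rintro _ ⟨_, -, rfl⟩; exact DU_nonneg)
  have hS₀ : 0 ≤ sSup S := Real.sSup_nonneg (by rintro _ ⟨_, -, rfl⟩; exact DU_nonneg)
  have hSL : S ⊆ L := by
    rintro _ ⟨𝒲, h𝒲, rfl⟩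
    exact ⟨𝒲, h𝒲.isOpenCover, rfl⟩
  rcases Finset.eventually_const_or_tendsto_card (monotone_nat_of_le_succ hFmono)
    with ⟨n₀, hconst⟩ | htend
  · have hL : ∀ d ∈ L, d ≤ 0 := by
      rintro _ ⟨_, -, rfl⟩
      exact (DU_eq_zero_of_eventually_const hconst).le
    exact le_antisymm ((Real.sSup_nonpos hL).trans hS₀)
      ((Real.sSup_nonpos fun d hd => hL d (hSL hd)).trans hL₀)
  have hL : BddAbove L := ⟨2, by rintro _ ⟨𝒰, h𝒰, rfl⟩; exact DU_le_two htend h𝒰.1 h𝒰.2.2⟩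
  refine le_antisymm (Real.sSup_le ?_ hS₀) (Real.sSup_le (fun _ hd => le_csSup hL (hSL hd)) hL₀)
  rintro _ ⟨𝒰, ⟨hfin, hopen, hcov⟩, rfl⟩
  rcases subsingleton_or_nontrivial X with _ | _
  · exact (DU_eq_zero_of_subsingleton hfin hcov).trans_le hS₀
  obtain ⟨t, 𝒲, h𝒲, href⟩ := exists_isStandardCover_joinRefines hopen hcov
  exact DU_le_of_joinRefines htend (fun i => (h𝒲 i).isOpenCover.1)
    (fun i => (h𝒲 i).isOpenCover.2.2) href hS₀ fun i => le_csSup (hL.mono hSL) ⟨_, h𝒲 i, rfl⟩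

theorem stmt8 {G X Y : Type*} [Group G] [Countable G]
    [MetricSpace X] [CompactSpace X] [MetricSpace Y] [CompactSpace Y]
    [MulAction G X] [MulAction G Y]
    (hcX : ∀ g : G, Continuous fun x : X => g • x)
    (hcY : ∀ g : G, Continuous fun y : Y => g • y)
    (π : X → Y) (hπ : IsFactorMap G π)
    (F : ℕ → Finset G) (hF : IsFolnerSeq G F) (hFmono : ∀ n, F n ⊆ F (n + 1)) :
    DUSys F π = sSup {d : ℝ | ∃ 𝒲 : Set (Set X), IsStandardCover 𝒲 ∧ d = DU F 𝒲 π} :=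
  stmt8_general π F hFmono
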